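/- Let G₁ and G₂ be finite groups and H ≤ G₁ × G₂ a subgroup. Then there exist finite connected simple graphs Γ₁ and Γ₂ and a graph homomorphism φ : Γ₁ → Γ₂ such that Aut(Γ₁) ≅ G₁, Aut(Γ₂) ≅ G₂ and Aut(φ) ≅ H. -/

import Mathlib

/-- The automorphism group of a binary relational system `R` over a label set `I`,
as a subgroup of the permutations of the vertex set. -/
def relAut {I V : Type*} (R : I → V → V → Prop) : Subgroup (Equiv.Perm V) where
  carrier := {e | ∀ i v w, R i v w ↔ R i (e v) (e w)}
  one_mem' := by intro i v w; simp
  mul_mem' := by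
    intro a b ha hb i v w
    simpa [Equiv.Perm.mul_apply] using (hb i v w).trans (ha i (b v) (b w))
  inv_mem' := by
    intro a ha i v w
    simpa [Equiv.Perm.coe_inv, Equiv.apply_symm_apply] using (ha i (a⁻¹ v) (a⁻¹ w)).symm

/-- The automorphism group of a morphism of binary relational systems, i.e. the subgroup of
`Aut(R₁) × Aut(R₂)` of pairs commuting with `f`. -/
def relArrowAut {I V₁ V₂ : Type*} (R₁ : I → V₁ → V₁ → Prop) (R₂ : I → V₂ → V₂ → Prop)
    (f : V₁ → V₂) : Subgroup (relAut R₁ × relAut R₂) where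
  carrier := {p | ∀ v, f ((p.1 : Equiv.Perm V₁) v) = (p.2 : Equiv.Perm V₂) (f v)}
  one_mem' := by intro v; simp
  mul_mem' := by
    intro a b ha hb v
    simp only [Prod.fst_mul, Prod.snd_mul, Subgroup.coe_mul, Equiv.Perm.mul_apply]
    rw [ha ((b.1 : Equiv.Perm V₁) v), hb v]
  inv_mem' := by
    intro a ha v
    simp only [Prod.fst_inv, Prod.snd_inv, Subgroup.coe_inv]
    have h := ha ((a.1 : Equiv.Perm V₁)⁻¹ v)
    simp only [Equiv.Perm.coe_inv, Equiv.apply_symm_apply] at h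
    rw [h]; simp

/-- The automorphism group of a simple graph, as a subgroup of the permutations of the
vertex set. -/
def graphAut {V : Type*} (G : SimpleGraph V) : Subgroup (Equiv.Perm V) where
  carrier := {e | ∀ v w, G.Adj v w ↔ G.Adj (e v) (e w)}
  one_mem' := by intro v w; simp
  mul_mem' := by
    intro a b ha hb v w
    simpa [Equiv.Perm.mul_apply] using (hb v w).trans (ha (b v) (b w))
  inv_mem' := by
    intro a ha v w
    simpa [Equiv.Perm.coe_inv, Equiv.apply_symm_apply] using (ha (a⁻¹ v) (a⁻¹ w)).symm

/-- The automorphism group of a graph homomorphism, i.e. the subgroup of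
`Aut(Γ₁) × Aut(Γ₂)` of pairs commuting with `f`. -/
def graphArrowAut {V₁ V₂ : Type*} (Γ₁ : SimpleGraph V₁) (Γ₂ : SimpleGraph V₂)
    (f : V₁ → V₂) : Subgroup (graphAut Γ₁ × graphAut Γ₂) where
  carrier := {p | ∀ v, f ((p.1 : Equiv.Perm V₁) v) = (p.2 : Equiv.Perm V₂) (f v)}
  one_mem' := by intro v; simp
  mul_mem' := by
    intro a b ha hb v
    simp only [Prod.fst_mul, Prod.snd_mul, Subgroup.coe_mul, Equiv.Perm.mul_apply]
    rw [ha ((b.1 : Equiv.Perm V₁) v), hb v]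
  inv_mem' := by
    intro a ha v
    simp only [Prod.fst_inv, Prod.snd_inv, Subgroup.coe_inv]
    have h := ha ((a.1 : Equiv.Perm V₁)⁻¹ v)
    simp only [Equiv.Perm.coe_inv, Equiv.apply_symm_apply] at h
    rw [h]; simp

universe u

section Enc

variable {V I : Type u} (R : I → V → V → Prop) (ℓ : I → ℕ)

def AREdge := {p : I × V × V // R p.1 p.2.1 p.2.2}

variable {R}

def AREdge.idx (e : AREdge R) : I := e.1.1
def AREdge.src (e : AREdge R) : V := e.1.2.1
def AREdge.tgt (e : AREdge R) : V := e.1.2.2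

variable (R)

abbrev ARX := V ⊕ (Σ e : AREdge R, Fin (2 + ℓ e.idx))

def ARstepN (a b : ℕ) : Prop := (a = 0 ∧ b = 1) ∨ (a = 0 ∧ b = 2) ∨ (2 ≤ a ∧ b = a + 1)

def ARStep : ARX R ℓ → ARX R ℓ → Prop
  | .inl x, .inr ⟨e, k⟩ => (x = e.src ∧ (k : ℕ) = 0) ∨ (x = e.tgt ∧ (k : ℕ) = 1)
  | .inr ⟨e, k⟩, .inr ⟨e', k'⟩ => e = e' ∧ ARstepN k k'
  | _, _ => False

def AREnc : SimpleGraph (ARX R ℓ) where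
  Adj u v := ARStep R ℓ u v ∨ ARStep R ℓ v u
  symm := ⟨fun u v h => h.symm⟩
  loopless := ⟨by
    intro u h
    rcases u with x | ⟨e, k⟩ <;> rcases h with h | h <;>
      simp [ARStep, ARstepN, -Fin.val_eq_zero_iff] at h <;> omega⟩

variable {R ℓ}

lemma ARsigma_eq {e e' : AREdge R} {k : Fin (2 + ℓ e.idx)} {k' : Fin (2 + ℓ e'.idx)}
    (he : e = e') (hk : (k : ℕ) = (k' : ℕ)) :
    (⟨e, k⟩ : Σ e : AREdge R, Fin (2 + ℓ e.idx)) = ⟨e', k'⟩ := by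
  subst he; exact congrArg _ (Fin.ext hk)

lemma ARsigma_eq_iff {e e' : AREdge R} {k : Fin (2 + ℓ e.idx)} {k' : Fin (2 + ℓ e'.idx)} :
    (⟨e, k⟩ : Σ e : AREdge R, Fin (2 + ℓ e.idx)) = ⟨e', k'⟩ ↔ e = e' ∧ (k : ℕ) = (k' : ℕ) := by
  constructor
  · rintro h
    obtain ⟨he, hk⟩ := Sigma.mk.inj_iff.mp h
    subst he
    exact ⟨rfl, congrArg Fin.val (eq_of_heq hk)⟩
  · rintro ⟨he, hk⟩; exact ARsigma_eq he hk

lemma AREdge.ext {e e' : AREdge R} (h1 : e.idx = e'.idx) (h2 : e.src = e'.src)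
    (h3 : e.tgt = e'.tgt) : e = e' := by
  apply Subtype.ext
  exact Prod.ext h1 (Prod.ext h2 h3)

lemma adj_inl_inl {x y : V} : ¬ (AREnc R ℓ).Adj (.inl x) (.inl y) := by
  rintro (h | h) <;> exact h

lemma adj_inl_inr {x : V} {e : AREdge R} {k : Fin (2 + ℓ e.idx)} :
    (AREnc R ℓ).Adj (.inl x) (.inr ⟨e, k⟩) ↔
      (x = e.src ∧ (k : ℕ) = 0) ∨ (x = e.tgt ∧ (k : ℕ) = 1) := by
  constructor
  · rintro (h | h)
    · exact h
    · exact h.elim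
  · exact fun h => Or.inl h

lemma adj_inr_inr {e e' : AREdge R} {k : Fin (2 + ℓ e.idx)} {k' : Fin (2 + ℓ e'.idx)} :
    (AREnc R ℓ).Adj (.inr ⟨e, k⟩) (.inr ⟨e', k'⟩) ↔
      e = e' ∧ (ARstepN k k' ∨ ARstepN k' k) := by
  constructor
  · rintro (⟨he, h⟩ | ⟨he, h⟩)
    · exact ⟨he, Or.inl h⟩
    · exact ⟨he.symm, Or.inr h⟩
  · rintro ⟨he, h | h⟩
    · exact Or.inl ⟨he, h⟩
    · exact Or.inr ⟨he.symm, h⟩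

end Enc
section Ext

variable {V I : Type u} {R : I → V → V → Prop} (ℓ : I → ℕ)

lemma mem_relAut_iff {σ : Equiv.Perm V} :
    σ ∈ relAut R ↔ ∀ i v w, R i v w ↔ R i (σ v) (σ w) := Iff.rfl

lemma mem_graphAut_iff {W : Type*} {G : SimpleGraph W} {σ : Equiv.Perm W} :
    σ ∈ graphAut G ↔ ∀ v w, G.Adj v w ↔ G.Adj (σ v) (σ w) := Iff.rfl

/-- One-directional extension of a map on `V` preserving `R` to the encoding vertices. -/
def ARextFun (τ : V → V) (hτ : ∀ i v w, R i v w → R i (τ v) (τ w)) :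
    ARX R ℓ → ARX R ℓ
  | .inl x => .inl (τ x)
  | .inr ⟨⟨(i, x, y), h⟩, k⟩ => .inr ⟨⟨(i, τ x, τ y), hτ i x y h⟩, k⟩

/-- Extension of a relational automorphism to a permutation of the encoding vertices. -/
def ARextPerm (τ : Equiv.Perm V) (hτ : τ ∈ relAut R) : Equiv.Perm (ARX R ℓ) where
  toFun := ARextFun ℓ τ (fun i v w h => (hτ i v w).mp h)
  invFun := ARextFun ℓ τ.symm (fun i v w h => by
    have := (hτ i (τ.symm v) (τ.symm w)).mp
    simp only [Equiv.apply_symm_apply] at this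
    exact ((hτ i (τ.symm v) (τ.symm w)).mpr (by simpa using h)))
  left_inv := by
    rintro (x | ⟨⟨⟨i, x, y⟩, h⟩, k⟩)
    · simp [ARextFun]
    · simp only [ARextFun]
      congr 1
      exact ARsigma_eq (AREdge.ext rfl (by simp [AREdge.src]) (by simp [AREdge.tgt])) rfl
  right_inv := by
    rintro (x | ⟨⟨⟨i, x, y⟩, h⟩, k⟩)
    · simp [ARextFun]
    · simp only [ARextFun]
      congr 1
      exact ARsigma_eq (AREdge.ext rfl (by simp [AREdge.src]) (by simp [AREdge.tgt])) rfl

lemma ARextFun_step {τ : V → V} {hτ : ∀ i v w, R i v w → R i (τ v) (τ w)} {u v : ARX R ℓ}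
    (h : ARStep R ℓ u v) : ARStep R ℓ (ARextFun ℓ τ hτ u) (ARextFun ℓ τ hτ v) := by
  rcases u with x | ⟨⟨⟨i, x, y⟩, hx⟩, k⟩ <;> rcases v with z | ⟨⟨⟨i', x', y'⟩, hx'⟩, k'⟩ <;>
    simp only [ARStep, ARextFun] at h ⊢
  · rcases h with ⟨rfl, hk⟩ | ⟨rfl, hk⟩
    · exact Or.inl ⟨rfl, hk⟩
    · exact Or.inr ⟨rfl, hk⟩
  · obtain ⟨he, hs⟩ := h
    obtain ⟨h1, h2, h3⟩ : i = i' ∧ x = x' ∧ y = y' := by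
      obtain ⟨a, b⟩ := Subtype.mk.injEq .. ▸ he
      exact ⟨congrArg Prod.fst (Subtype.ext_iff.mp he), (Prod.ext_iff.mp (Prod.ext_iff.mp (Subtype.ext_iff.mp he)).2).1, (Prod.ext_iff.mp (Prod.ext_iff.mp (Subtype.ext_iff.mp he)).2).2⟩
    subst h1; subst h2; subst h3
    exact ⟨by rfl, hs⟩

lemma ARextPerm_mem {τ : Equiv.Perm V} (hτ : τ ∈ relAut R) :
    ARextPerm ℓ τ hτ ∈ graphAut (AREnc R ℓ) := by
  rw [mem_graphAut_iff]
  intro u v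
  constructor
  · rintro (h | h)
    · exact Or.inl (ARextFun_step ℓ h)
    · exact Or.inr (ARextFun_step ℓ h)
  · intro h
    have h' : (AREnc R ℓ).Adj ((ARextPerm ℓ τ hτ).symm (ARextPerm ℓ τ hτ u))
        ((ARextPerm ℓ τ hτ).symm (ARextPerm ℓ τ hτ v)) := by
      rcases h with h | h
      · exact Or.inl (ARextFun_step ℓ h)
      · exact Or.inr (ARextFun_step ℓ h)
    simpa using h'

/-- The extension as a homomorphism of groups. -/
def ARextHom : (relAut R) →* (graphAut (AREnc R ℓ)) where
  toFun τ := ⟨ARextPerm ℓ τ.1 τ.2, ARextPerm_mem ℓ τ.2⟩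
  map_one' := by
    apply Subtype.ext; apply Equiv.ext
    rintro (x | ⟨⟨⟨i, x, y⟩, h⟩, k⟩) <;> rfl
  map_mul' σ τ := by
    apply Subtype.ext; apply Equiv.ext
    rintro (x | ⟨⟨⟨i, x, y⟩, h⟩, k⟩) <;> rfl

lemma ARextHom_injective : Function.Injective (ARextHom (R := R) ℓ) := by
  intro σ τ h
  apply Subtype.ext; apply Equiv.ext; intro x
  have := congrArg (fun (s : graphAut (AREnc R ℓ)) => (s : Equiv.Perm (ARX R ℓ)) (.inl x)) h
  simp only [ARextHom, ARextPerm, ARextFun, MonoidHom.coe_mk, OneHom.coe_mk, Equiv.coe_fn_mk] at this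
  exact Sum.inl.injEq _ _ ▸ (by injection this)

end Ext


section Hard

variable {V I : Type u} {R : I → V → V → Prop} {ℓ : I → ℕ}

lemma AR_inr_eq_iff {e e' : AREdge R} {k : Fin (2 + ℓ e.idx)} {k' : Fin (2 + ℓ e'.idx)} :
    (Sum.inr ⟨e, k⟩ : ARX R ℓ) = Sum.inr ⟨e', k'⟩ ↔ e = e' ∧ (k : ℕ) = (k' : ℕ) := by
  rw [Sum.inr.injEq, ARsigma_eq_iff]


lemma AR_inr_ne_idx {e e' : AREdge R} {k : Fin (2 + ℓ e.idx)} {k' : Fin (2 + ℓ e'.idx)}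
    (h : e ≠ e') : (Sum.inr ⟨e, k⟩ : ARX R ℓ) ≠ Sum.inr ⟨e', k'⟩ :=
  fun hc => h (AR_inr_eq_iff.mp hc).1

lemma AR_inr_ne_val {e e' : AREdge R} {k : Fin (2 + ℓ e.idx)} {k' : Fin (2 + ℓ e'.idx)}
    (h : (k : ℕ) ≠ (k' : ℕ)) : (Sum.inr ⟨e, k⟩ : ARX R ℓ) ≠ Sum.inr ⟨e', k'⟩ :=
  fun hc => h (AR_inr_eq_iff.mp hc).2

lemma ARstepN_bdd {a k : ℕ} (h : ARstepN a k ∨ ARstepN k a) :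
    a = (if k = 0 then 1 else if k = 2 then 0 else k - 1) ∨
      a = (if k = 0 then 2 else k + 1) := by
  unfold ARstepN at h; split_ifs <;> omega

/-- Every gadget vertex has at most three neighbours. -/
lemma ARnbr3 (e : AREdge R) (k : Fin (2 + ℓ e.idx)) :
    ∃ a b c : ARX R ℓ, ∀ u, (AREnc R ℓ).Adj u (.inr ⟨e, k⟩) → u = a ∨ u = b ∨ u = c := by
  classical
  refine ⟨if (k : ℕ) = 0 then .inl e.src else .inl e.tgt,
    if h : (if (k : ℕ) = 0 then 1 else if (k : ℕ) = 2 then 0 else (k : ℕ) - 1) < 2 + ℓ e.idx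
      then .inr ⟨e, ⟨_, h⟩⟩ else .inl e.src,
    if h : (if (k : ℕ) = 0 then 2 else (k : ℕ) + 1) < 2 + ℓ e.idx
      then .inr ⟨e, ⟨_, h⟩⟩ else .inl e.src, ?_⟩
  rintro (x | ⟨e'', k''⟩) hadj
  · rcases adj_inl_inr.mp hadj with ⟨rfl, hk⟩ | ⟨rfl, hk⟩
    · left; rw [if_pos hk]
    · left; rw [if_neg (by omega)]
  · obtain ⟨he, hcombo⟩ := adj_inr_inr.mp hadj
    subst he
    rcases ARstepN_bdd hcombo with hv | hv
    · right; left
      have hb : (if (k : ℕ) = 0 then 1 else if (k : ℕ) = 2 then 0 else (k : ℕ) - 1)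
          < 2 + ℓ e''.idx := by rw [← hv]; exact k''.2
      rw [dif_pos hb]
      exact congrArg Sum.inr (ARsigma_eq rfl hv)
    · right; right
      have hb : (if (k : ℕ) = 0 then 2 else (k : ℕ) + 1) < 2 + ℓ e''.idx := by
        rw [← hv]; exact k''.2
      rw [dif_pos hb]
      exact congrArg Sum.inr (ARsigma_eq rfl hv)

/-- A node with positive position has at most two neighbours. -/
lemma ARnbr2 (e : AREdge R) (k : Fin (2 + ℓ e.idx)) (hk : (k : ℕ) ≠ 0) :
    ∃ a b : ARX R ℓ, ∀ u, (AREnc R ℓ).Adj u (.inr ⟨e, k⟩) → u = a ∨ u = b := by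
  classical
  by_cases h1 : (k : ℕ) = 1
  · refine ⟨.inl e.tgt, .inr ⟨e, ⟨0, by omega⟩⟩, ?_⟩
    rintro (x | ⟨e'', k''⟩) hadj
    · rcases adj_inl_inr.mp hadj with ⟨rfl, hk0⟩ | ⟨rfl, _⟩
      · omega
      · left; rfl
    · obtain ⟨he, hcombo⟩ := adj_inr_inr.mp hadj
      subst he
      have hz : (k'' : ℕ) = 0 := by
        unfold ARstepN at hcombo; omega
      right
      exact congrArg Sum.inr (ARsigma_eq rfl hz)
  · refine ⟨if h : (if (k : ℕ) = 2 then 0 else (k : ℕ) - 1) < 2 + ℓ e.idx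
        then .inr ⟨e, ⟨_, h⟩⟩ else .inl e.src,
      if h : (k : ℕ) + 1 < 2 + ℓ e.idx then .inr ⟨e, ⟨_, h⟩⟩ else .inl e.src, ?_⟩
    rintro (x | ⟨e'', k''⟩) hadj
    · rcases adj_inl_inr.mp hadj with ⟨rfl, hk0⟩ | ⟨rfl, hk0⟩ <;> omega
    · obtain ⟨he, hcombo⟩ := adj_inr_inr.mp hadj
      subst he
      have hv : (k'' : ℕ) = (if (k : ℕ) = 2 then 0 else (k : ℕ) - 1) ∨
          (k'' : ℕ) = (k : ℕ) + 1 := by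
        unfold ARstepN at hcombo; split_ifs <;> omega
      rcases hv with hv | hv
      · left
        have hb : (if (k : ℕ) = 2 then 0 else (k : ℕ) - 1) < 2 + ℓ e''.idx := by
          rw [← hv]; exact k''.2
        rw [dif_pos hb]
        exact congrArg Sum.inr (ARsigma_eq rfl hv)
      · right
        have hb : (k : ℕ) + 1 < 2 + ℓ e''.idx := by rw [← hv]; exact k''.2
        rw [dif_pos hb]
        exact congrArg Sum.inr (ARsigma_eq rfl hv)

/-- Automorphisms of the encoding map base vertices to base vertices. -/
lemma ARinl_to_inl {d₁ d₂ : I} (hd : d₁ ≠ d₂) (hdiag : ∀ v : V, R d₁ v v ∧ R d₂ v v)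
    {σ : Equiv.Perm (ARX R ℓ)} (hσ : σ ∈ graphAut (AREnc R ℓ)) (x : V) :
    ∃ y, σ (.inl x) = .inl y := by
  classical
  rcases hx : σ (.inl x) with y | ⟨e, k⟩
  · exact ⟨y, rfl⟩
  exfalso
  have hAB : (⟨(d₁, x, x), (hdiag x).1⟩ : AREdge R) ≠ ⟨(d₂, x, x), (hdiag x).2⟩ := by
    intro h
    exact hd (congrArg (fun e : AREdge R => e.idx) h)
  obtain ⟨a, b, c, hbd⟩ := ARnbr3 (ℓ := ℓ) e k
  have himg : ∀ n, (AREnc R ℓ).Adj (.inl x) n → σ n = a ∨ σ n = b ∨ σ n = c := by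
    intro n hn
    have := (hσ (.inl x) n).mp hn
    rw [hx] at this
    exact hbd _ ((AREnc R ℓ).adj_symm this)
  have hne : ∀ {m n : ARX R ℓ}, m ≠ n → σ m ≠ σ n := fun h hc => h (σ.injective hc)
  have hA0 := himg (.inr ⟨⟨(d₁, x, x), (hdiag x).1⟩, ⟨0, by omega⟩⟩) (Or.inl (Or.inl ⟨rfl, rfl⟩))
  have hA1 := himg (.inr ⟨⟨(d₁, x, x), (hdiag x).1⟩, ⟨1, by omega⟩⟩) (Or.inl (Or.inr ⟨rfl, rfl⟩))
  have hB0 := himg (.inr ⟨⟨(d₂, x, x), (hdiag x).2⟩, ⟨0, by omega⟩⟩) (Or.inl (Or.inl ⟨rfl, rfl⟩))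
  have hB1 := himg (.inr ⟨⟨(d₂, x, x), (hdiag x).2⟩, ⟨1, by omega⟩⟩) (Or.inl (Or.inr ⟨rfl, rfl⟩))
  have h01 := hne (m := .inr ⟨⟨(d₁, x, x), (hdiag x).1⟩, ⟨0, by omega⟩⟩)
    (n := .inr ⟨⟨(d₁, x, x), (hdiag x).1⟩, ⟨1, by omega⟩⟩) (AR_inr_ne_val (by simp))
  have h02 := hne (m := .inr ⟨⟨(d₁, x, x), (hdiag x).1⟩, ⟨0, by omega⟩⟩)
    (n := .inr ⟨⟨(d₂, x, x), (hdiag x).2⟩, ⟨0, by omega⟩⟩) (AR_inr_ne_idx hAB)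
  have h03 := hne (m := .inr ⟨⟨(d₁, x, x), (hdiag x).1⟩, ⟨0, by omega⟩⟩)
    (n := .inr ⟨⟨(d₂, x, x), (hdiag x).2⟩, ⟨1, by omega⟩⟩) (AR_inr_ne_idx hAB)
  have h12 := hne (m := .inr ⟨⟨(d₁, x, x), (hdiag x).1⟩, ⟨1, by omega⟩⟩)
    (n := .inr ⟨⟨(d₂, x, x), (hdiag x).2⟩, ⟨0, by omega⟩⟩) (AR_inr_ne_idx hAB)
  have h13 := hne (m := .inr ⟨⟨(d₁, x, x), (hdiag x).1⟩, ⟨1, by omega⟩⟩)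
    (n := .inr ⟨⟨(d₂, x, x), (hdiag x).2⟩, ⟨1, by omega⟩⟩) (AR_inr_ne_idx hAB)
  have h23 := hne (m := .inr ⟨⟨(d₂, x, x), (hdiag x).2⟩, ⟨0, by omega⟩⟩)
    (n := .inr ⟨⟨(d₂, x, x), (hdiag x).2⟩, ⟨1, by omega⟩⟩) (AR_inr_ne_val (by simp))
  rcases hA0 with h | h | h <;> rcases hA1 with h' | h' | h' <;>
    rcases hB0 with h'' | h'' | h'' <;> rcases hB1 with h''' | h''' | h''' <;> simp_all only [ne_eq, not_true_eq_false]

end Hard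

section Track

variable {V I : Type u} {R : I → V → V → Prop} {ℓ : I → ℕ}

lemma ARtrack (hℓ1 : ∀ i, 1 ≤ ℓ i) {σ : Equiv.Perm (ARX R ℓ)}
    (hσ : σ ∈ graphAut (AREnc R ℓ)) {f : V → V}
    (hf : ∀ x, σ (.inl x) = .inl (f x))
    (hinr : ∀ t, ∃ s, σ (.inr t) = .inr s) (e : AREdge R) :
    ∃ e' : AREdge R, e'.src = f e.src ∧ e'.tgt = f e.tgt ∧
      ∀ j (hj : j < 2 + ℓ e.idx), ∃ hj' : j < 2 + ℓ e'.idx,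
        σ (.inr ⟨e, ⟨j, hj⟩⟩) = .inr ⟨e', ⟨j, hj'⟩⟩ := by
  classical
  have hI : ∀ u v, (AREnc R ℓ).Adj u v → (AREnc R ℓ).Adj (σ u) (σ v) :=
    fun u v h => (hσ u v).mp h
  have hb0 : (0 : ℕ) < 2 + ℓ e.idx := by omega
  have hb1 : (1 : ℕ) < 2 + ℓ e.idx := by omega
  have hb2 : (2 : ℕ) < 2 + ℓ e.idx := by have := hℓ1 e.idx; omega
  -- the image of node 0
  obtain ⟨⟨e', k0⟩, h0⟩ := hinr ⟨e, ⟨0, hb0⟩⟩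
  have hadj0 : (AREnc R ℓ).Adj (.inl e.src) (.inr ⟨e, ⟨0, hb0⟩⟩) :=
    Or.inl (Or.inl ⟨rfl, rfl⟩)
  have h0' := hI _ _ hadj0
  rw [hf, h0] at h0'
  have hk00 : f e.src = e'.src ∧ (k0 : ℕ) = 0 := by
    rcases adj_inl_inr.mp h0' with h | ⟨hsrc, hk0⟩
    · exact h
    · -- k0 has position 1, but node 0 has three distinct neighbours
      exfalso
      obtain ⟨a, b, hab⟩ := ARnbr2 e' k0 (by omega)
      have i2 : (AREnc R ℓ).Adj (σ (.inr ⟨e, ⟨1, hb1⟩⟩)) (.inr ⟨e', k0⟩) := by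
        have : (AREnc R ℓ).Adj (.inr ⟨e, ⟨1, hb1⟩⟩) (.inr ⟨e, ⟨0, hb0⟩⟩) :=
          Or.inr ⟨rfl, Or.inl ⟨rfl, rfl⟩⟩
        have := hI _ _ this; rwa [h0] at this
      have i3 : (AREnc R ℓ).Adj (σ (.inr ⟨e, ⟨2, hb2⟩⟩)) (.inr ⟨e', k0⟩) := by
        have : (AREnc R ℓ).Adj (.inr ⟨e, ⟨2, hb2⟩⟩) (.inr ⟨e, ⟨0, hb0⟩⟩) :=
          Or.inr ⟨rfl, Or.inr (Or.inl ⟨rfl, rfl⟩)⟩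
        have := hI _ _ this; rwa [h0] at this
      have d1 : (.inl (f e.src) : ARX R ℓ) ≠ σ (.inr ⟨e, ⟨1, hb1⟩⟩) := by
        rw [← hf]; exact fun hc => by cases σ.injective hc
      have d2 : (.inl (f e.src) : ARX R ℓ) ≠ σ (.inr ⟨e, ⟨2, hb2⟩⟩) := by
        rw [← hf]; exact fun hc => by cases σ.injective hc
      have d3 : σ (.inr ⟨e, ⟨1, hb1⟩⟩) ≠ σ (.inr ⟨e, ⟨2, hb2⟩⟩) :=
        fun hc => absurd (σ.injective hc) (AR_inr_ne_val (by simp))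
      rcases hab _ h0' with h | h <;> rcases hab _ i2 with h' | h' <;>
        rcases hab _ i3 with h'' | h'' <;> simp_all
  obtain ⟨hsrc, hk0⟩ := hk00
  -- the image of node 1
  obtain ⟨⟨e1, k1⟩, h1⟩ := hinr ⟨e, ⟨1, hb1⟩⟩
  have hadj01 : (AREnc R ℓ).Adj (.inr ⟨e, ⟨0, hb0⟩⟩) (.inr ⟨e, ⟨1, hb1⟩⟩) :=
    Or.inl ⟨rfl, Or.inl ⟨rfl, rfl⟩⟩
  have h01' := hI _ _ hadj01
  rw [h0, h1] at h01'
  obtain ⟨hee1, hcombo1⟩ := adj_inr_inr.mp h01'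
  subst hee1
  have hk1cand : (k1 : ℕ) = 1 ∨ (k1 : ℕ) = 2 := by
    unfold ARstepN at hcombo1; omega
  have hadjt : (AREnc R ℓ).Adj (.inl e.tgt) (.inr ⟨e, ⟨1, hb1⟩⟩) :=
    Or.inl (Or.inr ⟨rfl, rfl⟩)
  have ht' := hI _ _ hadjt
  rw [hf, h1] at ht'
  have hk11 : f e.tgt = e'.tgt ∧ (k1 : ℕ) = 1 := by
    rcases adj_inl_inr.mp ht' with ⟨hs, hk⟩ | h
    · omega
    · exact ⟨h.1, h.2⟩
  obtain ⟨htgt, hk1⟩ := hk11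
  -- all nodes map positionally
  refine ⟨e', hsrc.symm, htgt.symm, ?_⟩
  intro j
  induction j using Nat.strong_induction_on with
  | _ j IH =>
    intro hj
    match j with
    | 0 =>
      refine ⟨by omega, ?_⟩
      rw [h0]
      exact congrArg Sum.inr (ARsigma_eq rfl hk0)
    | 1 =>
      refine ⟨by omega, ?_⟩
      rw [h1]
      exact congrArg Sum.inr (ARsigma_eq rfl hk1)
    | (m + 2) =>
      obtain ⟨⟨em, km⟩, hm⟩ := hinr ⟨e, ⟨m + 2, hj⟩⟩
      have hp2 : ((if m = 0 then 0 else m + 1) = 0 ∧ m = 0) ∨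
          ((if m = 0 then 0 else m + 1) = m + 1 ∧ 1 ≤ m) := by
        split_ifs with h <;> omega
      set p : ℕ := if m = 0 then 0 else m + 1 with hpdef
      have hpb : p < 2 + ℓ e.idx := by rcases hp2 with ⟨h, _⟩ | ⟨h, _⟩ <;> omega
      obtain ⟨hp', hQp⟩ := IH p (by rcases hp2 with ⟨h, _⟩ | ⟨h, _⟩ <;> omega) hpb
      have hadjp : (AREnc R ℓ).Adj (.inr ⟨e, ⟨p, hpb⟩⟩) (.inr ⟨e, ⟨m + 2, hj⟩⟩) := by
        refine Or.inl ⟨rfl, ?_⟩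
        show ARstepN p (m + 2)
        unfold ARstepN
        rcases hp2 with ⟨h, h'⟩ | ⟨h, h'⟩ <;> omega
      have him := hI _ _ hadjp
      rw [hQp, hm] at him
      obtain ⟨heem, hcombom⟩ := adj_inr_inr.mp him
      subst heem
      have hcombom' : ARstepN p (km : ℕ) ∨ ARstepN (km : ℕ) p := hcombom
      have hcand : (km : ℕ) = m + 2 ∨ (km : ℕ) < m + 2 := by
        unfold ARstepN at hcombom'
        rcases hp2 with ⟨h, h'⟩ | ⟨h, h'⟩ <;> omega
      rcases hcand with hv | hv
    
      · refine ⟨by rw [← hv]; exact km.2, ?_⟩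
        rw [hm]
        exact congrArg Sum.inr (ARsigma_eq rfl hv)
      · exfalso
        have hkb : (km : ℕ) < 2 + ℓ e.idx := by omega
        obtain ⟨h'', hQa⟩ := IH (km : ℕ) (by omega) hkb
        have heq : σ (.inr ⟨e, ⟨m + 2, hj⟩⟩) = σ (.inr ⟨e, ⟨(km : ℕ), hkb⟩⟩) := by
          rw [hm, hQa]
        have := (AR_inr_eq_iff.mp (σ.injective heq)).2
        simp at this
        omega

end Track

section Surj

variable {V I : Type u} {R : I → V → V → Prop} {ℓ : I → ℕ}

lemma ARtrackFull (hℓ1 : ∀ i, 1 ≤ ℓ i) (hℓinj : Function.Injective ℓ)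
    {σ : Equiv.Perm (ARX R ℓ)} (hσ : σ ∈ graphAut (AREnc R ℓ))
    (hσs : σ.symm ∈ graphAut (AREnc R ℓ)) {f g : V → V}
    (hf : ∀ x, σ (.inl x) = .inl (f x)) (hg : ∀ x, σ.symm (.inl x) = .inl (g x))
    (hinr : ∀ t, ∃ s, σ (.inr t) = .inr s)
    (hinrs : ∀ t, ∃ s, σ.symm (.inr t) = .inr s) (e : AREdge R) :
    ∃ e' : AREdge R, e'.idx = e.idx ∧ e'.src = f e.src ∧ e'.tgt = f e.tgt ∧
      ∀ j (hj : j < 2 + ℓ e.idx), ∃ hj' : j < 2 + ℓ e'.idx,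
        σ (.inr ⟨e, ⟨j, hj⟩⟩) = .inr ⟨e', ⟨j, hj'⟩⟩ := by
  obtain ⟨e', h1, h2, Q⟩ := ARtrack hℓ1 hσ hf hinr e
  obtain ⟨e'', g1, g2, Q'⟩ := ARtrack hℓ1 hσs hg hinrs e'
  have he'' : e'' = e := by
    obtain ⟨hb', hq⟩ := Q 0 (by omega)
    obtain ⟨hb'', hq'⟩ := Q' 0 (by omega)
    have h3 : σ.symm (.inr ⟨e', ⟨0, hb'⟩⟩) = .inr ⟨e, ⟨0, by omega⟩⟩ := by
      rw [← hq]; exact σ.symm_apply_apply _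
    have h4 := hq'.symm.trans h3
    exact (AR_inr_eq_iff.mp h4).1
  have hlen1 : ℓ e.idx ≤ ℓ e'.idx := by
    obtain ⟨hb', -⟩ := Q (ℓ e.idx + 1) (by omega); omega
  have hlen2 : ℓ e'.idx ≤ ℓ e.idx := by
    obtain ⟨hb', -⟩ := Q' (ℓ e'.idx + 1) (by omega)
    rw [he''] at hb'; omega
  exact ⟨e', hℓinj (Nat.le_antisymm hlen1 hlen2).symm, h1, h2, Q⟩

lemma ARextHom_surjective (hℓ1 : ∀ i, 1 ≤ ℓ i) (hℓinj : Function.Injective ℓ)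
    {d₁ d₂ : I} (hd : d₁ ≠ d₂) (hdiag : ∀ v : V, R d₁ v v ∧ R d₂ v v) :
    Function.Surjective (ARextHom (R := R) ℓ) := by
  classical
  rintro ⟨σ, hσ⟩
  have hσs : σ.symm ∈ graphAut (AREnc R ℓ) := (graphAut (AREnc R ℓ)).inv_mem hσ
  have hfex := fun x => ARinl_to_inl hd hdiag hσ x
  have hgex := fun x => ARinl_to_inl hd hdiag hσs x
  set f : V → V := fun x => (hfex x).choose with hfdef
  set g : V → V := fun x => (hgex x).choose with hgdef
  have hf : ∀ x, σ (.inl x) = .inl (f x) := fun x => (hfex x).choose_spec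
  have hg : ∀ x, σ.symm (.inl x) = .inl (g x) := fun x => (hgex x).choose_spec
  have hgf : ∀ x, g (f x) = x := by
    intro x
    have : σ.symm (σ (.inl x)) = .inl x := σ.symm_apply_apply _
    rw [hf, hg] at this
    exact Sum.inl.inj this
  have hfg : ∀ x, f (g x) = x := by
    intro x
    have : σ (σ.symm (.inl x)) = .inl x := σ.apply_symm_apply _
    rw [hg, hf] at this
    exact Sum.inl.inj this
  have hinr : ∀ t, ∃ s, σ (.inr t) = .inr s := by
    intro t
    rcases h : σ (.inr t) with y | s
    · exfalso
      have h2 : (.inr t : ARX R ℓ) = σ.symm (.inl y) := by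
        rw [← h]; exact (σ.symm_apply_apply _).symm
      rw [hg] at h2
      cases h2
    · exact ⟨s, rfl⟩
  have hinrs : ∀ t, ∃ s, σ.symm (.inr t) = .inr s := by
    intro t
    rcases h : σ.symm (.inr t) with y | s
    · exfalso
      have h2 : (.inr t : ARX R ℓ) = σ (.inl y) := by
        rw [← h]; exact (σ.apply_symm_apply _).symm
      rw [hf] at h2
      cases h2
    · exact ⟨s, rfl⟩
  have key := fun e => ARtrackFull hℓ1 hℓinj hσ hσs hf hg hinr hinrs e
  have keyS := fun e => ARtrackFull hℓ1 hℓinj hσs hσ hg hf hinrs hinr e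
  set τ : Equiv.Perm V := ⟨f, g, hgf, hfg⟩ with hτdef
  have hmem : τ ∈ relAut R := by
    intro i v w
    constructor
    · intro h
      obtain ⟨e', hidx, hsrc, htgt, -⟩ := key ⟨(i, v, w), h⟩
      have h2 : R e'.idx e'.src e'.tgt := e'.2
      rw [hidx, hsrc, htgt] at h2
      exact h2
    · intro h
      obtain ⟨e', hidx, hsrc, htgt, -⟩ := keyS ⟨(i, τ v, τ w), h⟩
      have h2 : R e'.idx e'.src e'.tgt := e'.2
      rw [hidx, hsrc, htgt] at h2
      have h2' : R i (g (f v)) (g (f w)) := h2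
      rw [hgf v, hgf w] at h2'
      exact h2'
  refine ⟨⟨τ, hmem⟩, ?_⟩
  apply Subtype.ext
  apply Equiv.ext
  rintro (x | ⟨⟨⟨i, x, y⟩, hr⟩, k⟩)
  · exact (hf x).symm
  · show ARextFun ℓ τ _ (.inr ⟨⟨(i, x, y), hr⟩, k⟩) = σ (.inr ⟨⟨(i, x, y), hr⟩, k⟩)
    obtain ⟨e', hidx, hsrc, htgt, Q⟩ := key ⟨(i, x, y), hr⟩
    obtain ⟨hj', hq⟩ := Q (k : ℕ) k.2
    have hk : σ (.inr ⟨⟨(i, x, y), hr⟩, k⟩) = .inr ⟨e', ⟨(k : ℕ), hj'⟩⟩ := hq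
    rw [hk]
    show (.inr ⟨⟨(i, f x, f y), _⟩, k⟩ : ARX R ℓ) = _
    exact congrArg Sum.inr
      (ARsigma_eq (AREdge.ext hidx.symm hsrc.symm htgt.symm) rfl)

end Surj

section Conn

variable {V I : Type u} {R : I → V → V → Prop} {ℓ : I → ℕ}

lemma ARreach_inl (e : AREdge R) (k : Fin (2 + ℓ e.idx)) :
    (AREnc R ℓ).Reachable (.inr ⟨e, k⟩) (.inl e.src) := by
  obtain ⟨n, hn⟩ : ∃ n, (k : ℕ) = n := ⟨_, rfl⟩
  induction n using Nat.strong_induction_on generalizing k with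
  | _ n IH =>
    match n with
    | 0 =>
      have : (AREnc R ℓ).Adj (.inr ⟨e, k⟩) (.inl e.src) := Or.inr (Or.inl ⟨rfl, hn⟩)
      exact this.reachable
    | (n + 1) =>
      have hpn : (if n + 1 ≤ 2 then 0 else n) < 2 + ℓ e.idx := by
        split_ifs <;> omega
      set p : ℕ := if n + 1 ≤ 2 then 0 else n with hp
      have hadj : (AREnc R ℓ).Adj (.inr ⟨e, ⟨p, hpn⟩⟩) (.inr ⟨e, k⟩) := by
        refine Or.inl ⟨rfl, ?_⟩
        show ARstepN p (k : ℕ)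
        unfold ARstepN
        rw [hp]; split_ifs <;> omega
      have hr := IH p (by rw [hp]; split_ifs <;> omega) ⟨p, hpn⟩ rfl
      exact (hadj.symm.reachable).trans hr

lemma ARreach_ll (hcon : ∀ x y : V, (∃ i, R i x y) ∨ (∃ i, R i y x)) (x y : V) :
    (AREnc R ℓ).Reachable (.inl x) (.inl y) := by
  have base : ∀ x y : V, (∃ i, R i x y) → (AREnc R ℓ).Reachable (.inl x) (.inl y) := by
    rintro x y ⟨i, hR⟩
    have hb0 : (0 : ℕ) < 2 + ℓ (AREdge.idx (R := R) ⟨(i, x, y), hR⟩) := by omega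
    have hb1 : (1 : ℕ) < 2 + ℓ (AREdge.idx (R := R) ⟨(i, x, y), hR⟩) := by omega
    have a1 : (AREnc R ℓ).Adj (.inl x) (.inr ⟨⟨(i, x, y), hR⟩, ⟨0, hb0⟩⟩) :=
      Or.inl (Or.inl ⟨rfl, rfl⟩)
    have a2 : (AREnc R ℓ).Adj (.inr ⟨⟨(i, x, y), hR⟩, ⟨0, hb0⟩⟩)
        (.inr ⟨⟨(i, x, y), hR⟩, ⟨1, hb1⟩⟩) := Or.inl ⟨rfl, Or.inl ⟨rfl, rfl⟩⟩
    have a3 : (AREnc R ℓ).Adj (.inr ⟨⟨(i, x, y), hR⟩, ⟨1, hb1⟩⟩) (.inl y) :=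
      Or.inr (Or.inr ⟨rfl, rfl⟩)
    exact a1.reachable.trans (a2.reachable.trans a3.reachable)
  rcases hcon x y with h | h
  · exact base x y h
  · exact (base y x h).symm

lemma AREnc_connected (hcon : ∀ x y : V, (∃ i, R i x y) ∨ (∃ i, R i y x))
    [Nonempty V] : (AREnc R ℓ).Connected := by
  have hne : Nonempty (ARX R ℓ) := ⟨.inl (Classical.arbitrary V)⟩
  haveI := hne
  refine SimpleGraph.Connected.mk ?_
  rintro (x | ⟨e, k⟩) (y | ⟨e', k'⟩)
  · exact ARreach_ll hcon x y
  · exact ((ARreach_inl e' k').trans (ARreach_ll hcon e'.src x)).symm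
  · exact (ARreach_inl e k).trans (ARreach_ll hcon e.src y)
  · exact (ARreach_inl e k).trans
      ((ARreach_ll hcon e.src e'.src).trans (ARreach_inl e' k').symm)

end Conn

section Alg

/-- Tag lengths: an injective positive function on a finite index type. -/
noncomputable def ARtag (I : Type u) [Finite I] : I → ℕ :=
  fun i => ((@Fintype.equivFin I (Fintype.ofFinite I)) i : ℕ) + 1

lemma ARtag_pos (I : Type u) [Finite I] : ∀ i, 1 ≤ ARtag I i := fun _ => Nat.le_add_left 1 _

lemma ARtag_inj (I : Type u) [Finite I] : Function.Injective (ARtag I) := by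
  intro a b h
  unfold ARtag at h
  exact (@Fintype.equivFin I (Fintype.ofFinite I)).injective (Fin.ext (by omega))

/-- From one-directional preservation for a group of permutations, get membership
in `relAut`. -/
lemma relAut_of_forward {G V I : Type*} [Group G] {R : I → V → V → Prop}
    (ρ : G →* Equiv.Perm V) (h : ∀ g i v w, R i v w → R i (ρ g v) (ρ g w)) :
    ∀ g, ρ g ∈ relAut R := by
  intro g i v w
  refine ⟨h g i v w, fun hr => ?_⟩
  have h2 := h g⁻¹ i _ _ hr
  rwa [← Equiv.Perm.mul_apply, ← Equiv.Perm.mul_apply, ← map_mul, inv_mul_cancel, map_one,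
    Equiv.Perm.one_apply, Equiv.Perm.one_apply] at h2

variable (G₁ G₂ : Type u) [Group G₁] [Group G₂] (H : Subgroup (G₁ × G₂))

/-- First relational system: the Cayley system of `G₁` together with two diagonal
relations. -/
def ARR1 : (G₁ ⊕ Bool) → G₁ → G₁ → Prop
  | .inl g, x, y => y = x * g
  | .inr _, x, y => y = x

def ARrho1 : G₁ →* Equiv.Perm G₁ where
  toFun g := Equiv.mulLeft g
  map_one' := by ext x; simp
  map_mul' a b := by ext x; simp [mul_assoc]

lemma ARrho1_forward : ∀ g i v w, ARR1 G₁ i v w → ARR1 G₁ i (ARrho1 G₁ g v) (ARrho1 G₁ g w) := by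
  rintro g (a | b) v w h
  · show g * w = (g * v) * a
    rw [show w = v * a from h, mul_assoc]
  · show g * w = g * v
    rw [show w = v from h]

lemma ARrho1_mem (g : G₁) : ARrho1 G₁ g ∈ relAut (ARR1 G₁) :=
  relAut_of_forward _ (ARrho1_forward G₁) g

noncomputable def ARrho1' : G₁ →* relAut (ARR1 G₁) :=
  (ARrho1 G₁).codRestrict _ (ARrho1_mem G₁)

lemma ARrho1'_bij : Function.Bijective (ARrho1' G₁) := by
  constructor
  · intro a b h
    have := congrArg (fun s : relAut (ARR1 G₁) => (s : Equiv.Perm G₁) 1) h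
    simpa [ARrho1', ARrho1] using this
  · rintro ⟨σ, hσ⟩
    refine ⟨σ 1, ?_⟩
    apply Subtype.ext
    apply Equiv.ext
    intro x
    have h1 : ARR1 G₁ (.inl x) 1 x := (one_mul x).symm
    have := (hσ (.inl x) 1 x).mp h1
    exact this.symm

/-- The coset space. -/
abbrev ARW := (G₁ × G₂) ⧸ H

/-- Second relational system on `G₂ ⊕ W`: Cayley system of `G₂`, the orbit relations
between `G₂` and `W`, the full relation on `W`, and two diagonal relations. -/
def ARR2 : ((G₂ ⊕ ARW G₁ G₂ H) ⊕ Option Bool) → (G₂ ⊕ ARW G₁ G₂ H) → (G₂ ⊕ ARW G₁ G₂ H) → Prop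
  | .inl (.inl h), v, v' => ∃ x : G₂, v = .inl x ∧ v' = .inl (x * h)
  | .inl (.inr c), v, v' => ∃ x : G₂, v = .inl x ∧ v' = .inr (((1 : G₁), x) • c)
  | .inr none, v, v' => (∃ w, v = .inr w) ∧ (∃ w', v' = .inr w')
  | .inr (some _), v, v' => v = v'

noncomputable def ARrho2 : G₂ →* Equiv.Perm (G₂ ⊕ ARW G₁ G₂ H) where
  toFun g := Equiv.sumCongr (Equiv.mulLeft g) (MulAction.toPerm (((1 : G₁), g) : G₁ × G₂))
  map_one' := by
    apply Equiv.ext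
    rintro (x | w)
    · show Sum.inl ((1 : G₂) * x) = Sum.inl x
      rw [one_mul]
    · show Sum.inr ((((1 : G₁), (1 : G₂)) : G₁ × G₂) • w) = Sum.inr w
      rw [show (((1 : G₁), (1 : G₂)) : G₁ × G₂) = 1 from rfl, one_smul]
  map_mul' a b := by
    apply Equiv.ext
    rintro (x | w)
    · show Sum.inl (a * b * x) = Sum.inl (a * (b * x))
      rw [mul_assoc]
    · show Sum.inr ((((1 : G₁), a * b) : G₁ × G₂) • w) =
        Sum.inr ((((1 : G₁), a) : G₁ × G₂) • ((((1 : G₁), b) : G₁ × G₂) • w))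
      rw [← mul_smul]
      congr 2
      simp

lemma ARrho2_forward : ∀ g i v w, ARR2 G₁ G₂ H i v w →
    ARR2 G₁ G₂ H i (ARrho2 G₁ G₂ H g v) (ARrho2 G₁ G₂ H g w) := by
  rintro g (( h | c) | (_ | _)) v w hr
  · obtain ⟨x, rfl, rfl⟩ := hr
    exact ⟨g * x, rfl, by show (Sum.inl (g * (x * h)) : G₂ ⊕ ARW G₁ G₂ H) = _; rw [mul_assoc]⟩
  · obtain ⟨x, rfl, rfl⟩ := hr
    refine ⟨g * x, rfl, ?_⟩
    show (Sum.inr ((((1 : G₁), g) : G₁ × G₂) • (((1 : G₁), x) : G₁ × G₂) • c) : G₂ ⊕ ARW G₁ G₂ H) = _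
    rw [← mul_smul]
    congr 2
    simp
  · obtain ⟨⟨w1, rfl⟩, ⟨w2, rfl⟩⟩ := hr
    exact ⟨⟨_, rfl⟩, ⟨_, rfl⟩⟩
  · exact congrArg _ hr

lemma ARrho2_mem (g : G₂) : ARrho2 G₁ G₂ H g ∈ relAut (ARR2 G₁ G₂ H) :=
  relAut_of_forward _ (ARrho2_forward G₁ G₂ H) g

noncomputable def ARrho2' : G₂ →* relAut (ARR2 G₁ G₂ H) :=
  (ARrho2 G₁ G₂ H).codRestrict _ (ARrho2_mem G₁ G₂ H)

lemma ARrho2'_bij : Function.Bijective (ARrho2' G₁ G₂ H) := by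
  constructor
  · intro a b h
    have := congrArg (fun s : relAut (ARR2 G₁ G₂ H) =>
      (s : Equiv.Perm (G₂ ⊕ ARW G₁ G₂ H)) (.inl 1)) h
    simp only [ARrho2', ARrho2, MonoidHom.codRestrict_apply] at this
    have h2 : (Sum.inl (a * 1) : G₂ ⊕ ARW G₁ G₂ H) = Sum.inl (b * 1) := this
    simpa using h2
  · rintro ⟨σ, hσ⟩
    obtain ⟨z0, hg1, -⟩ := (hσ (.inl (.inl (1 : G₂))) (.inl 1) (.inl 1)).mp
      ⟨1, rfl, by rw [one_mul]⟩
    set g : G₂ := z0 with hgdef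
    have hGg : ∀ x : G₂, σ (.inl x) = .inl (g * x) := by
      intro x
      obtain ⟨z, hz1, hz2⟩ := (hσ (.inl (.inl x)) (.inl 1) (.inl x)).mp
        ⟨1, rfl, by rw [one_mul]⟩
      have hzg : z = g := Sum.inl.inj (hz1.symm.trans hg1)
      rw [hz2, hzg]
    have hWg : ∀ c : ARW G₁ G₂ H, σ (.inr c) = .inr ((((1 : G₁), g) : G₁ × G₂) • c) := by
      intro c
      obtain ⟨z, hz1, hz2⟩ := (hσ (.inl (.inr c)) (.inl 1) (.inr c)).mp
        ⟨1, rfl, by rw [show (((1 : G₁), (1 : G₂)) : G₁ × G₂) • c = c from one_smul _ c]⟩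
      have hzg : z = g := Sum.inl.inj (hz1.symm.trans hg1)
      rw [hz2, hzg]
    refine ⟨g, ?_⟩
    apply Subtype.ext
    apply Equiv.ext
    rintro (x | c)
    · exact (hGg x).symm
    · exact (hWg c).symm

lemma ARR1_con : ∀ x y : G₁, (∃ i, ARR1 G₁ i x y) ∨ (∃ i, ARR1 G₁ i y x) :=
  fun x y => Or.inl ⟨.inl (x⁻¹ * y), by show y = x * (x⁻¹ * y); rw [mul_inv_cancel_left]⟩

lemma ARR2_con : ∀ v v' : G₂ ⊕ ARW G₁ G₂ H,
    (∃ i, ARR2 G₁ G₂ H i v v') ∨ (∃ i, ARR2 G₁ G₂ H i v' v) := by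
  rintro (x | w) (y | w')
  · exact Or.inl ⟨.inl (.inl (x⁻¹ * y)), ⟨x, rfl, by rw [mul_inv_cancel_left]⟩⟩
  · exact Or.inl ⟨.inl (.inr ((((1 : G₁), x) : G₁ × G₂)⁻¹ • w')),
      ⟨x, rfl, by rw [smul_inv_smul]⟩⟩
  · exact Or.inr ⟨.inl (.inr ((((1 : G₁), y) : G₁ × G₂)⁻¹ • w)),
      ⟨y, rfl, by rw [smul_inv_smul]⟩⟩
  · exact Or.inl ⟨.inr none, ⟨w, rfl⟩, ⟨w', rfl⟩⟩

end Alg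

section Arrow

lemma ARX_finite {V I : Type u} (R : I → V → V → Prop) (ℓ : I → ℕ)
    [Finite V] [Finite I] : Finite (ARX R ℓ) := by
  have h1 : Finite (AREdge R) := by unfold AREdge; exact Subtype.finite
  unfold ARX
  infer_instance

variable (G₁ G₂ : Type u) [Group G₁] [Group G₂] (H : Subgroup (G₁ × G₂))

def ARwmap (x : G₁) : ARW G₁ G₂ H := QuotientGroup.mk (x⁻¹, 1)

lemma ARwmap_key (g₁ : G₁) (g₂ : G₂) (x : G₁) :
    (((1 : G₁), g₂) : G₁ × G₂) • ARwmap G₁ G₂ H x = ARwmap G₁ G₂ H (g₁ * x) ↔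
      (g₁, g₂) ∈ H := by
  show (QuotientGroup.mk ((((1 : G₁), g₂) : G₁ × G₂) * (x⁻¹, 1)) : ARW G₁ G₂ H) =
    QuotientGroup.mk ((g₁ * x)⁻¹, 1) ↔ _
  rw [QuotientGroup.eq]
  have hcomp : ((((1 : G₁), g₂) : G₁ × G₂) * (x⁻¹, 1))⁻¹ * ((g₁ * x)⁻¹, 1) =
      ((g₁, g₂) : G₁ × G₂)⁻¹ := by
    rw [Prod.ext_iff]
    constructor
    · show (1 * x⁻¹)⁻¹ * (g₁ * x)⁻¹ = g₁⁻¹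
      rw [one_mul, inv_inv, mul_inv_rev, mul_inv_cancel_left]
    · show (g₂ * 1)⁻¹ * 1 = g₂⁻¹
      rw [mul_one, mul_one]
  rw [hcomp, inv_mem_iff]

/-- The distinguished "full" edges of the second system. -/
def AReU (a b : ARW G₁ G₂ H) : AREdge (ARR2 G₁ G₂ H) :=
  ⟨(.inr none, .inr a, .inr b), ⟨a, rfl⟩, ⟨b, rfl⟩⟩

variable [Finite G₁] [Finite G₂]

noncomputable def ARl1 : (G₁ ⊕ Bool) → ℕ := ARtag _
noncomputable def ARl2 : ((G₂ ⊕ ARW G₁ G₂ H) ⊕ Option Bool) → ℕ := ARtag _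

/-- The auxiliary target pattern for gadget nodes. -/
noncomputable def ARphiAux (a b : ARW G₁ G₂ H) (n : ℕ) :
    ARX (ARR2 G₁ G₂ H) (ARl2 G₁ G₂ H) :=
  if n = 0 then .inr ⟨AReU G₁ G₂ H a b, ⟨0, by omega⟩⟩
  else if n = 1 then .inr ⟨AReU G₁ G₂ H a b, ⟨1, by omega⟩⟩
  else if n % 2 = 0 then .inl (.inr a)
  else .inr ⟨AReU G₁ G₂ H a b, ⟨0, by omega⟩⟩

/-- The underlying map of the graph morphism. -/
noncomputable def ARphi : ARX (ARR1 G₁) (ARl1 G₁) → ARX (ARR2 G₁ G₂ H) (ARl2 G₁ G₂ H)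
  | .inl x => .inl (.inr (ARwmap G₁ G₂ H x))
  | .inr ⟨⟨(_, x, y), _⟩, k⟩ => ARphiAux G₁ G₂ H (ARwmap G₁ G₂ H x) (ARwmap G₁ G₂ H y) (k : ℕ)

lemma ARphiAux_adj (a b : ARW G₁ G₂ H) {n m : ℕ} (h : ARstepN n m) :
    (AREnc (ARR2 G₁ G₂ H) (ARl2 G₁ G₂ H)).Adj (ARphiAux G₁ G₂ H a b n)
      (ARphiAux G₁ G₂ H a b m) := by
  unfold ARphiAux
  rcases h with ⟨rfl, rfl⟩ | ⟨rfl, rfl⟩ | ⟨h2, rfl⟩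
  · simp only [if_pos rfl, if_neg one_ne_zero, if_pos rfl]
    exact Or.inl ⟨rfl, Or.inl ⟨rfl, rfl⟩⟩
  · norm_num
    exact Or.inr (Or.inl ⟨rfl, rfl⟩)
  · rcases Nat.even_or_odd n with he | ho
    · have hni : n % 2 = 0 := Nat.even_iff.mp he
      rw [if_neg (by omega : ¬ n = 0), if_neg (by omega : ¬ n = 1), if_pos hni,
        if_neg (by omega : ¬ n + 1 = 0), if_neg (by omega : ¬ n + 1 = 1),
        if_neg (by omega : ¬ (n + 1) % 2 = 0)]
      exact Or.inl (Or.inl ⟨rfl, rfl⟩)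
    · have hni : n % 2 = 1 := Nat.odd_iff.mp ho
      rw [if_neg (by omega : ¬ n = 0), if_neg (by omega : ¬ n = 1),
        if_neg (by omega : ¬ n % 2 = 0), if_neg (by omega : ¬ n + 1 = 0),
        if_neg (by omega : ¬ n + 1 = 1), if_pos (by omega : (n + 1) % 2 = 0)]
      exact Or.inr (Or.inl ⟨rfl, rfl⟩)

lemma ARphi_hom {u v : ARX (ARR1 G₁) (ARl1 G₁)}
    (h : (AREnc (ARR1 G₁) (ARl1 G₁)).Adj u v) :
    (AREnc (ARR2 G₁ G₂ H) (ARl2 G₁ G₂ H)).Adj (ARphi G₁ G₂ H u) (ARphi G₁ G₂ H v) := by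
  have step : ∀ {u v}, ARStep (ARR1 G₁) (ARl1 G₁) u v →
      (AREnc (ARR2 G₁ G₂ H) (ARl2 G₁ G₂ H)).Adj (ARphi G₁ G₂ H u) (ARphi G₁ G₂ H v) := by
    rintro (x | ⟨⟨⟨i, a, b⟩, hr⟩, k⟩) (y | ⟨⟨⟨i', a', b'⟩, hr'⟩, k'⟩) hs <;>
      simp only [ARStep] at hs
    · rcases hs with ⟨hx, hk⟩ | ⟨hx, hk⟩
      · show (AREnc _ _).Adj (.inl (.inr (ARwmap G₁ G₂ H x))) (ARphiAux G₁ G₂ H _ _ (k' : ℕ))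
        rw [hk]
        unfold ARphiAux
        rw [if_pos rfl]
        have hx' : x = a' := hx
        rw [hx']
        exact Or.inl (Or.inl ⟨rfl, rfl⟩)
      · show (AREnc _ _).Adj (.inl (.inr (ARwmap G₁ G₂ H x))) (ARphiAux G₁ G₂ H _ _ (k' : ℕ))
        rw [hk]
        unfold ARphiAux
        rw [if_neg one_ne_zero, if_pos rfl]
        have hx' : x = b' := hx
        rw [hx']
        exact Or.inl (Or.inr ⟨rfl, rfl⟩)
    · obtain ⟨he, hs⟩ := hs
      obtain ⟨h1, h2, h3⟩ : i = i' ∧ a = a' ∧ b = b' :=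
        ⟨congrArg (fun e : AREdge (ARR1 G₁) => e.idx) he,
         congrArg (fun e : AREdge (ARR1 G₁) => e.src) he,
         congrArg (fun e : AREdge (ARR1 G₁) => e.tgt) he⟩
      subst h1; subst h2; subst h3
      exact ARphiAux_adj G₁ G₂ H _ _ hs
  rcases h with h | h
  · exact step h
  · exact (AREnc _ _).adj_symm (step h)

end Arrow

section Final

variable (G₁ G₂ : Type u) [Group G₁] [Group G₂] (H : Subgroup (G₁ × G₂))
variable [Finite G₁] [Finite G₂]

noncomputable def ARA1 : G₁ →* graphAut (AREnc (ARR1 G₁) (ARl1 G₁)) :=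
  (ARextHom (ARl1 G₁)).comp (ARrho1' G₁)

noncomputable def ARA2 : G₂ →* graphAut (AREnc (ARR2 G₁ G₂ H) (ARl2 G₁ G₂ H)) :=
  (ARextHom (ARl2 G₁ G₂ H)).comp (ARrho2' G₁ G₂ H)

lemma ARA1_bij : Function.Bijective (ARA1 G₁) := by
  have hc : ⇑(ARA1 G₁) = ⇑(ARextHom (ARl1 G₁)) ∘ ⇑(ARrho1' G₁) := rfl
  rw [Function.Bijective, hc]
  have hsurj : Function.Surjective (ARextHom (R := ARR1 G₁) (ARl1 G₁)) :=
    ARextHom_surjective (ARtag_pos _) (ARtag_inj _)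
      (d₁ := (Sum.inr false : G₁ ⊕ Bool)) (d₂ := (Sum.inr true : G₁ ⊕ Bool))
      (by simp) (fun v => ⟨rfl, rfl⟩)
  exact ⟨(ARextHom_injective _).comp (ARrho1'_bij G₁).1,
    hsurj.comp (ARrho1'_bij G₁).2⟩

lemma ARA2_bij : Function.Bijective (ARA2 G₁ G₂ H) := by
  have hc : ⇑(ARA2 G₁ G₂ H) = ⇑(ARextHom (ARl2 G₁ G₂ H)) ∘ ⇑(ARrho2' G₁ G₂ H) := rfl
  rw [Function.Bijective, hc]
  have hsurj : Function.Surjective (ARextHom (R := ARR2 G₁ G₂ H) (ARl2 G₁ G₂ H)) :=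
    ARextHom_surjective (ARtag_pos _) (ARtag_inj _)
      (d₁ := (Sum.inr (some false) : (G₂ ⊕ ARW G₁ G₂ H) ⊕ Option Bool))
      (d₂ := (Sum.inr (some true) : (G₂ ⊕ ARW G₁ G₂ H) ⊕ Option Bool))
      (by simp) (fun v => ⟨rfl, rfl⟩)
  exact ⟨(ARextHom_injective _).comp (ARrho2'_bij G₁ G₂ H).1,
    hsurj.comp (ARrho2'_bij G₁ G₂ H).2⟩

lemma ARphiAux_eqv (g₂ : G₂) (a b : ARW G₁ G₂ H) (n : ℕ) :
    ((ARA2 G₁ G₂ H g₂ : graphAut (AREnc (ARR2 G₁ G₂ H) (ARl2 G₁ G₂ H))) :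
        Equiv.Perm (ARX (ARR2 G₁ G₂ H) (ARl2 G₁ G₂ H))) (ARphiAux G₁ G₂ H a b n) =
      ARphiAux G₁ G₂ H ((((1 : G₁), g₂) : G₁ × G₂) • a) ((((1 : G₁), g₂) : G₁ × G₂) • b) n := by
  unfold ARphiAux
  split_ifs <;> rfl

lemma AReqv {g₁ : G₁} {g₂ : G₂} (hmem : (g₁, g₂) ∈ H)
    (v : ARX (ARR1 G₁) (ARl1 G₁)) :
    ARphi G₁ G₂ H (((ARA1 G₁ g₁ : graphAut (AREnc (ARR1 G₁) (ARl1 G₁))) :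
        Equiv.Perm (ARX (ARR1 G₁) (ARl1 G₁))) v) =
      ((ARA2 G₁ G₂ H g₂ : graphAut (AREnc (ARR2 G₁ G₂ H) (ARl2 G₁ G₂ H))) :
        Equiv.Perm (ARX (ARR2 G₁ G₂ H) (ARl2 G₁ G₂ H))) (ARphi G₁ G₂ H v) := by
  rcases v with x | ⟨⟨⟨i, x, y⟩, hr⟩, k⟩
  · show (Sum.inl (Sum.inr (ARwmap G₁ G₂ H (g₁ * x))) : ARX (ARR2 G₁ G₂ H) (ARl2 G₁ G₂ H)) =
      Sum.inl (Sum.inr ((((1 : G₁), g₂) : G₁ × G₂) • ARwmap G₁ G₂ H x))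
    rw [(ARwmap_key G₁ G₂ H g₁ g₂ x).mpr hmem]
  · show ARphiAux G₁ G₂ H (ARwmap G₁ G₂ H (g₁ * x)) (ARwmap G₁ G₂ H (g₁ * y)) (k : ℕ) =
      ((ARA2 G₁ G₂ H g₂ : graphAut (AREnc (ARR2 G₁ G₂ H) (ARl2 G₁ G₂ H))) :
        Equiv.Perm (ARX (ARR2 G₁ G₂ H) (ARl2 G₁ G₂ H)))
        (ARphiAux G₁ G₂ H (ARwmap G₁ G₂ H x) (ARwmap G₁ G₂ H y) (k : ℕ))
    rw [ARphiAux_eqv, (ARwmap_key G₁ G₂ H g₁ g₂ x).mpr hmem,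
      (ARwmap_key G₁ G₂ H g₁ g₂ y).mpr hmem]

noncomputable def ARtheta :
    H →* graphArrowAut (AREnc (ARR1 G₁) (ARl1 G₁)) (AREnc (ARR2 G₁ G₂ H) (ARl2 G₁ G₂ H))
      (ARphi G₁ G₂ H) where
  toFun p := ⟨(ARA1 G₁ p.1.1, ARA2 G₁ G₂ H p.1.2), fun v => AReqv G₁ G₂ H p.2 v⟩
  map_one' := by
    apply Subtype.ext
    show (ARA1 G₁ (1 : G₁), ARA2 G₁ G₂ H (1 : G₂)) = 1
    rw [map_one, map_one]
    rfl
  map_mul' p q := by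
    apply Subtype.ext
    show (ARA1 G₁ (p.1.1 * q.1.1), ARA2 G₁ G₂ H (p.1.2 * q.1.2)) = _
    rw [map_mul, map_mul]
    rfl

lemma ARtheta_bij : Function.Bijective (ARtheta G₁ G₂ H) := by
  constructor
  · intro p q h
    have h1 := congrArg (fun s => (s : (graphAut (AREnc (ARR1 G₁) (ARl1 G₁)) ×
      graphAut (AREnc (ARR2 G₁ G₂ H) (ARl2 G₁ G₂ H)))).1) (Subtype.ext_iff.mp h)
    have h2 := congrArg (fun s => (s : (graphAut (AREnc (ARR1 G₁) (ARl1 G₁)) ×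
      graphAut (AREnc (ARR2 G₁ G₂ H) (ARl2 G₁ G₂ H)))).2) (Subtype.ext_iff.mp h)
    apply Subtype.ext
    apply Prod.ext
    · exact (ARA1_bij G₁).1 h1
    · exact (ARA2_bij G₁ G₂ H).1 h2
  · rintro ⟨⟨σ1, σ2⟩, hc⟩
    obtain ⟨g₁, hg1⟩ := (ARA1_bij G₁).2 σ1
    obtain ⟨g₂, hg2⟩ := (ARA2_bij G₁ G₂ H).2 σ2
    have hmem : (g₁, g₂) ∈ H := by
      have hv := hc (.inl (1 : G₁))
      rw [← hg1, ← hg2] at hv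
      have hv2 : (Sum.inl (Sum.inr (ARwmap G₁ G₂ H (g₁ * 1))) :
          ARX (ARR2 G₁ G₂ H) (ARl2 G₁ G₂ H)) =
          Sum.inl (Sum.inr ((((1 : G₁), g₂) : G₁ × G₂) • ARwmap G₁ G₂ H 1)) := hv
      have hv3 := Sum.inr.inj (Sum.inl.inj hv2)
      exact (ARwmap_key G₁ G₂ H g₁ g₂ 1).mp hv3.symm
    refine ⟨⟨(g₁, g₂), hmem⟩, ?_⟩
    apply Subtype.ext
    show (ARA1 G₁ g₁, ARA2 G₁ G₂ H g₂) = (σ1, σ2)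
    rw [hg1, hg2]

end Final


/-- **Realisability in the arrow category of graphs, finite case.**
For finite groups `G₁`, `G₂` and any subgroup `H ≤ G₁ × G₂`, there exist finite connected
simple graphs `Γ₁`, `Γ₂` and a graph homomorphism `φ : Γ₁ → Γ₂` with `Aut(Γ₁) ≅ G₁`,
`Aut(Γ₂) ≅ G₂` and `Aut(φ) ≅ H`. -/
theorem arrow_realisability_in_finite_graphs (G₁ G₂ : Type u) [Group G₁] [Group G₂]
    [Finite G₁] [Finite G₂] (H : Subgroup (G₁ × G₂)) :
    ∃ (V₁ V₂ : Type u) (Γ₁ : SimpleGraph V₁) (Γ₂ : SimpleGraph V₂) (φ : Γ₁ →g Γ₂),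
      Finite V₁ ∧ Finite V₂ ∧ Γ₁.Connected ∧ Γ₂.Connected ∧
      Nonempty (graphAut Γ₁ ≃* G₁) ∧ Nonempty (graphAut Γ₂ ≃* G₂) ∧
      Nonempty (graphArrowAut Γ₁ Γ₂ ⇑φ ≃* H) := by
  haveI : Nonempty G₁ := ⟨1⟩
  haveI : Nonempty (G₂ ⊕ ARW G₁ G₂ H) := ⟨.inl 1⟩
  refine ⟨ARX (ARR1 G₁) (ARl1 G₁), ARX (ARR2 G₁ G₂ H) (ARl2 G₁ G₂ H),
    AREnc (ARR1 G₁) (ARl1 G₁), AREnc (ARR2 G₁ G₂ H) (ARl2 G₁ G₂ H),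
    ⟨ARphi G₁ G₂ H, fun h => ARphi_hom G₁ G₂ H h⟩,
    ARX_finite _ _, ARX_finite _ _,
    AREnc_connected (ARR1_con G₁), AREnc_connected (ARR2_con G₁ G₂ H),
    ⟨(MulEquiv.ofBijective (ARA1 G₁) (ARA1_bij G₁)).symm⟩,
    ⟨(MulEquiv.ofBijective (ARA2 G₁ G₂ H) (ARA2_bij G₁ G₂ H)).symm⟩,
    ⟨(MulEquiv.ofBijective (ARtheta G₁ G₂ H) (ARtheta_bij G₁ G₂ H)).symm⟩⟩
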